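/- Let X_i ⊂ {0,1}^{d_i}, X_j ⊂ {0,1}^{d_j} be finite nonempty sets with binary coupling matrices A_i, A_j mapping them into {0,1}^K, and let θ_i, θ_j be cost vectors. Suppose there exist x* ∈ argmin_{x∈X_i}⟨θ_i,x⟩ and y* ∈ argmin_{y∈X_j}⟨θ_j,y⟩ with A_i x* = A_j y* (marginal consistency on the edge ij). If Δ ∈ ℝ^K satisfies the sign conditions relative to ν := A_i x* (Δ(s) ≥ 0 when ν(s)=1, Δ(s) ≤ 0 when ν(s)=0) and x* remains optimal for θ_i + A_iᵀΔ, then min_{x∈X_i}⟨θ_i,x⟩ + min_{y∈X_j}⟨θ_j,y⟩ = min_{x∈X_i}⟨θ_i + A_iᵀΔ,x⟩ + min_{y∈X_j}⟨θ_j − A_jᵀΔ,y⟩, and moreover x* and y* remain optimal for the updated costs. -/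

import Mathlib

/-!
Along the coupling, `⟪Aᵀ Δ, x⟫ = ⟪Δ, A x⟫`, so the update shifts each factor's cost by the
linear function `Δ ⬝ A x`. The sign conditions say exactly that the 0/1 vector `ν = A_i x*`
maximizes `μ ↦ Δ ⬝ μ` over the cube `[0,1]^K`; as `A_j y* = ν`, subtracting `Δ ⬝ A_j y` keeps
`y*` optimal for factor `j`. Both minima are then attained at `x*` and `y*`, and the two shifts
`± Δ ⬝ ν` cancel in the sum.
-/

open Matrix

theorem Finset.inf'_eq_of_isMinOn {α β : Type*} [LinearOrder β] {s : Finset α}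
    (hs : s.Nonempty) {f : α → β} {a : α} (ha : a ∈ s) (hmin : IsMinOn f s a) :
    s.inf' hs f = f a :=
  le_antisymm (Finset.inf'_le f ha) (Finset.le_inf' hs f fun _ hx => isMinOn_iff.1 hmin _ hx)

section Coupling

variable {ι m n : Type*} [Fintype ι] [Fintype m] [Fintype n]

theorem Matrix.transpose_mulVec_dotProduct (A : Matrix m n ℝ) (Δ : m → ℝ) (v : n → ℝ) :
    Aᵀ *ᵥ Δ ⬝ᵥ v = Δ ⬝ᵥ A *ᵥ v := by
  rw [mulVec_transpose, ← dotProduct_mulVec]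

theorem dotProduct_le_of_sign_conditions {Δ ν μ : ι → ℝ}
    (hν : ∀ s, ν s = 0 ∨ ν s = 1) (hμ : ∀ s, μ s ∈ Set.Icc 0 1)
    (hΔ : ∀ s, (ν s = 1 → 0 ≤ Δ s) ∧ (ν s = 0 → Δ s ≤ 0)) :
    Δ ⬝ᵥ μ ≤ Δ ⬝ᵥ ν := by
  refine Finset.sum_le_sum fun s _ => ?_
  obtain ⟨hμ0, hμ1⟩ := hμ s
  rcases hν s with h | h
  · rw [h, mul_zero]
    exact mul_nonpos_of_nonpos_of_nonneg ((hΔ s).2 h) hμ0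
  · rw [h, mul_one]
    exact mul_le_of_le_one_right ((hΔ s).1 h) hμ1

theorem isMinOn_sub_transpose_mulVec {X : Set (n → ℝ)} {θ : n → ℝ} {y : n → ℝ}
    (A : Matrix m n ℝ) (Δ : m → ℝ) (hmin : IsMinOn (θ ⬝ᵥ ·) X y)
    (hΔ : ∀ z ∈ X, Δ ⬝ᵥ A *ᵥ z ≤ Δ ⬝ᵥ A *ᵥ y) :
    IsMinOn ((θ - Aᵀ *ᵥ Δ) ⬝ᵥ ·) X y := by
  refine isMinOn_iff.2 fun z hz => ?_
  simp only [sub_dotProduct, transpose_mulVec_dotProduct]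
  linarith [isMinOn_iff.1 hmin z hz, hΔ z hz]

end Coupling

open Matrix in
theorem marginal_consistency_fixed_point_general
    (di dj K : ℕ)
    (Xi : Finset (Fin di → ℝ)) (hXi : Xi.Nonempty)
    (Xj : Finset (Fin dj → ℝ)) (hXj : Xj.Nonempty)
    (Ai : Matrix (Fin K) (Fin di) ℝ) (Aj : Matrix (Fin K) (Fin dj) ℝ)
    (hAj : ∀ y ∈ Xj, ∀ s, Aj.mulVec y s = 0 ∨ Aj.mulVec y s = 1)
    (θi : Fin di → ℝ) (θj : Fin dj → ℝ)
    (xstar : Fin di → ℝ) (hxstar : xstar ∈ Xi)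
    (ystar : Fin dj → ℝ) (hystar : ystar ∈ Xj)
    (hxmin : ∀ x ∈ Xi, dotProduct θi xstar ≤ dotProduct θi x)
    (hymin : ∀ y ∈ Xj, dotProduct θj ystar ≤ dotProduct θj y)
    (hcons : Ai.mulVec xstar = Aj.mulVec ystar)
    (Δ : Fin K → ℝ)
    (hΔ : ∀ s, (Ai.mulVec xstar s = 1 → 0 ≤ Δ s) ∧ (Ai.mulVec xstar s = 0 → Δ s ≤ 0))
    (hxmin' : ∀ x ∈ Xi,
      dotProduct (θi + Ai.transpose.mulVec Δ) xstar ≤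
        dotProduct (θi + Ai.transpose.mulVec Δ) x) :
    (Xi.inf' hXi (fun x => dotProduct θi x) +
        Xj.inf' hXj (fun y => dotProduct θj y) =
      Xi.inf' hXi (fun x => dotProduct (θi + Ai.transpose.mulVec Δ) x) +
        Xj.inf' hXj (fun y => dotProduct (θj - Aj.transpose.mulVec Δ) y)) ∧
    (∀ y ∈ Xj,
      dotProduct (θj - Aj.transpose.mulVec Δ) ystar ≤
        dotProduct (θj - Aj.transpose.mulVec Δ) y) := by
  have hunit : ∀ y ∈ Xj, ∀ s, (Aj *ᵥ y) s ∈ Set.Icc (0 : ℝ) 1 := fun y hy s => by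
    rcases hAj y hy s with h | h <;> simp [h]
  rw [hcons] at hΔ
  have hystar' : IsMinOn ((θj - Ajᵀ *ᵥ Δ) ⬝ᵥ ·) (Xj : Set _) ystar :=
    isMinOn_sub_transpose_mulVec Aj Δ (isMinOn_iff.2 hymin) fun y hy =>
      dotProduct_le_of_sign_conditions (hAj ystar hystar) (hunit y hy) hΔ
  refine ⟨?_, isMinOn_iff.1 hystar'⟩
  rw [Xi.inf'_eq_of_isMinOn hXi hxstar (isMinOn_iff.2 hxmin),
    Xj.inf'_eq_of_isMinOn hXj hystar (isMinOn_iff.2 hymin),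
    Xi.inf'_eq_of_isMinOn hXi hxstar (isMinOn_iff.2 hxmin'),
    Xj.inf'_eq_of_isMinOn hXj hystar hystar', add_dotProduct, sub_dotProduct,
    transpose_mulVec_dotProduct, transpose_mulVec_dotProduct, hcons]
  ring

open Matrix in
/-- Fixed-point property (core of Theorem 2): under marginal consistency on an
edge, any admissible message update leaves the dual lower bound unchanged and
preserves the consistent pair of minimizers. -/
theorem marginal_consistency_fixed_point
    (di dj K : ℕ)
    (Xi : Finset (Fin di → ℝ)) (hXi : Xi.Nonempty)
    (Xj : Finset (Fin dj → ℝ)) (hXj : Xj.Nonempty)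
    (hXibin : ∀ x ∈ Xi, ∀ t, x t = 0 ∨ x t = 1)
    (hXjbin : ∀ y ∈ Xj, ∀ t, y t = 0 ∨ y t = 1)
    (Ai : Matrix (Fin K) (Fin di) ℝ) (Aj : Matrix (Fin K) (Fin dj) ℝ)
    (hAi : ∀ x ∈ Xi, ∀ s, Ai.mulVec x s = 0 ∨ Ai.mulVec x s = 1)
    (hAj : ∀ y ∈ Xj, ∀ s, Aj.mulVec y s = 0 ∨ Aj.mulVec y s = 1)
    (θi : Fin di → ℝ) (θj : Fin dj → ℝ)
    (xstar : Fin di → ℝ) (hxstar : xstar ∈ Xi)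
    (ystar : Fin dj → ℝ) (hystar : ystar ∈ Xj)
    (hxmin : ∀ x ∈ Xi, dotProduct θi xstar ≤ dotProduct θi x)
    (hymin : ∀ y ∈ Xj, dotProduct θj ystar ≤ dotProduct θj y)
    (hcons : Ai.mulVec xstar = Aj.mulVec ystar)
    (Δ : Fin K → ℝ)
    (hΔ : ∀ s, (Ai.mulVec xstar s = 1 → 0 ≤ Δ s) ∧ (Ai.mulVec xstar s = 0 → Δ s ≤ 0))
    (hxmin' : ∀ x ∈ Xi,
      dotProduct (θi + Ai.transpose.mulVec Δ) xstar ≤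
        dotProduct (θi + Ai.transpose.mulVec Δ) x) :
    (Xi.inf' hXi (fun x => dotProduct θi x) +
        Xj.inf' hXj (fun y => dotProduct θj y) =
      Xi.inf' hXi (fun x => dotProduct (θi + Ai.transpose.mulVec Δ) x) +
        Xj.inf' hXj (fun y => dotProduct (θj - Aj.transpose.mulVec Δ) y)) ∧
    (∀ y ∈ Xj,
      dotProduct (θj - Aj.transpose.mulVec Δ) ystar ≤
        dotProduct (θj - Aj.transpose.mulVec Δ) y) :=
  marginal_consistency_fixed_point_general di dj K Xi hXi Xj hXj Ai Aj hAj θi θj xstar hxstar ystar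
    hystar hxmin hymin hcons Δ hΔ hxmin'
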